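/- arXiv:0907.4217 — 2 statements merged into one kernel-verified Lean document; each statement's English description precedes it below -/
import Mathlib

section
/- Let max_ε be a regularized maximum, A a smooth real (1,1)-form (equivalently, a Hermitian-matrix-valued smooth function), and u, v smooth real functions on Ω ⊆ ℂⁿ such that A + dd^c u ≥ 0 and A + dd^c v ≥ 0 (positive semidefinite complex Hessians). Then A + dd^c max_ε(u, v) ≥ 0. -/
/-!
At `p = (u z, v z)` the convex function `max_ε` lies above its tangent plane, whose slope `(a, b)`
is a pair of convex weights because `max_ε` stays within a bounded distance of `max`. On every
real line through `z`, `max_ε (u, v) - (a u + b v)` is therefore minimal at `z`, so its second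
derivative there is nonnegative. Summing over the directions `w` and `i w` gives
`dd^c max_ε (u, v) ≥ a dd^c u + b dd^c v`, hence
`A + dd^c max_ε (u, v) ≥ a (A + dd^c u) + b (A + dd^c v) ≥ 0`.
-/

open ComplexConjugate

/-- The complex Laplacian of `u` at `z` in the complex direction `w`: up to a positive
constant, this is the evaluation `dd^c u (z)(w, w̄)` of the complex Hessian of `u` on
the direction `w`. -/
noncomputable def ddcDir {n : ℕ} (u : (Fin n → ℂ) → ℝ) (z w : Fin n → ℂ) : ℝ :=
  deriv (deriv fun t : ℝ => u (z + (t : ℂ) • w)) 0 +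
  deriv (deriv fun t : ℝ => u (z + ((t : ℂ) * Complex.I) • w)) 0

/-- Evaluation of the Hermitian-matrix-valued function `A` (a smooth real `(1,1)`-form)
on the direction `w`: the real number `w̄ᵗ A(z) w`. -/
noncomputable def hermEval {n : ℕ} (A : (Fin n → ℂ) → Matrix (Fin n) (Fin n) ℂ)
    (z : Fin n → ℂ) (w : Fin n → ℂ) : ℝ :=
  (∑ i : Fin n, ∑ j : Fin n, conj (w i) * A z i j * w j).re

open Set Filter Topology

theorem ConvexOn.add_fderiv_sub_le {E : Type*} [NormedAddCommGroup E] [NormedSpace ℝ E]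
    {s : Set E} {F : E → ℝ} {F' : E →L[ℝ] ℝ} {p q : E} (hF : ConvexOn ℝ s F) (hp : p ∈ s)
    (hq : q ∈ s) (hF' : HasFDerivAt F F' p) : F p + F' (q - p) ≤ F q := by
  let γ : ℝ →ᵃ[ℝ] E := AffineMap.lineMap p q
  have hγ₀ : γ 0 = p := AffineMap.lineMap_apply_zero p q
  have hγ₁ : γ 1 = q := AffineMap.lineMap_apply_one p q
  have hderiv : HasDerivAt (F ∘ γ) (F' (q - p)) 0 :=
    hF'.comp_hasDerivAt_of_eq 0 AffineMap.hasDerivAt_lineMap hγ₀.symm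
  have := (hF.comp_affineMap γ).le_slope_of_hasDerivAt (by simpa [hγ₀]) (by simpa [hγ₁]) one_pos
    hderiv
  rw [slope_def_field, Function.comp_apply, Function.comp_apply, hγ₀, hγ₁, sub_zero,
    div_one] at this
  linarith

theorem IsLocalMin.deriv_deriv_nonneg {f : ℝ → ℝ} {x₀ : ℝ} (hmin : IsLocalMin f x₀)
    (hc : ContinuousAt f x₀) : 0 ≤ deriv (deriv f) x₀ := by
  by_contra! hneg
  have hmax : IsLocalMax f x₀ := isLocalMax_of_deriv_deriv_neg hneg hmin.deriv_eq_zero hc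
  have hconst : f =ᶠ[𝓝 x₀] fun _ => f x₀ := by
    filter_upwards [hmin, hmax] with x h₁ h₂ using le_antisymm h₂ h₁
  have hderiv : deriv f =ᶠ[𝓝 x₀] fun _ => 0 := by
    filter_upwards [hconst.eventuallyEq_nhds] with x hx
    rw [hx.deriv_eq, deriv_const]
  rw [hderiv.deriv_eq, deriv_const] at hneg
  exact hneg.false

theorem deriv_deriv_eq_iteratedDeriv_two {𝕜 : Type*} [NontriviallyNormedField 𝕜] {E : Type*}
    [NormedAddCommGroup E] [NormedSpace 𝕜 E] (f : 𝕜 → E) :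
    deriv (deriv f) = iteratedDeriv 2 f := by
  rw [iteratedDeriv_succ, iteratedDeriv_one]

theorem deriv_deriv_le_of_isLocalMin_sub {f g : ℝ → ℝ} {x₀ : ℝ} (hf : ContDiffAt ℝ 2 f x₀)
    (hg : ContDiffAt ℝ 2 g x₀) (hmin : IsLocalMin (f - g) x₀) :
    deriv (deriv g) x₀ ≤ deriv (deriv f) x₀ := by
  have := hmin.deriv_deriv_nonneg (hf.continuousAt.sub hg.continuousAt)
  simp only [deriv_deriv_eq_iteratedDeriv_two] at this ⊢
  rw [iteratedDeriv_sub hf hg] at this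
  linarith

theorem nonpos_of_forall_nonneg_mul_le {c K : ℝ} (h : ∀ t ≥ 0, t * c ≤ K) : c ≤ 0 := by
  by_contra! hc
  have := h ((|K| + 1) / c) (by positivity)
  rw [div_mul_cancel₀ _ hc.ne'] at this
  linarith [le_abs_self K]

theorem nonneg_nonneg_add_eq_one_of_le_max_add {a b C : ℝ}
    (h : ∀ x y, a * x + b * y ≤ max x y + C) : 0 ≤ a ∧ 0 ≤ b ∧ a + b = 1 := by
  have ha : -a ≤ 0 := nonpos_of_forall_nonneg_mul_le (K := C) fun t ht => by
    have := h (-t) 0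
    rw [max_eq_right (by linarith)] at this
    linarith
  have hb : -b ≤ 0 := nonpos_of_forall_nonneg_mul_le (K := C) fun t ht => by
    have := h 0 (-t)
    rw [max_eq_left (by linarith)] at this
    linarith
  have hle : a + b - 1 ≤ 0 := nonpos_of_forall_nonneg_mul_le (K := C) fun t _ => by
    have := h t t
    rw [max_self] at this
    linarith
  have hge : 1 - (a + b) ≤ 0 := nonpos_of_forall_nonneg_mul_le (K := C) fun t _ => by
    have := h (-t) (-t)
    rw [max_self] at this
    linarith
  exact ⟨by linarith, by linarith, by linarith⟩

theorem ConvexOn.le_max_add_of_eq_max {F : ℝ × ℝ → ℝ} {ε : ℝ} (hF : ConvexOn ℝ univ F)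
    (hmax : ∀ x y, ε < |x - y| → F (x, y) = max x y) (x y : ℝ) :
    F (x, y) ≤ max x y + (|ε| + 1) := by
  by_cases hxy : ε < |x - y|
  · rw [hmax x y hxy]
    linarith [abs_nonneg ε]
  -- Off the strip `F = max`, and `(x, y)` is the midpoint of two such points.
  set K := |ε| + 1
  have hstrip := abs_le.1 (not_lt.1 hxy)
  have hε := le_abs_self ε
  have h₁ : F (x + K, y - K) = x + K := by
    rw [hmax _ _ (lt_abs.2 (Or.inl (by linarith))), max_eq_left (by linarith)]
  have h₂ : F (x - K, y + K) = y + K := by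
    rw [hmax _ _ (lt_abs.2 (Or.inr (by linarith))), max_eq_right (by linarith)]
  have hmid := hF.2 (mem_univ (x + K, y - K)) (mem_univ (x - K, y + K))
    (by norm_num : (0 : ℝ) ≤ 1 / 2) (by norm_num : (0 : ℝ) ≤ 1 / 2) (by norm_num)
  have hxy' : (1 / 2 : ℝ) • (x + K, y - K) + (1 / 2 : ℝ) • (x - K, y + K) = (x, y) := by
    ext <;> simp <;> ring
  rw [hxy', h₁, h₂, smul_eq_mul, smul_eq_mul] at hmid
  linarith [le_max_left x y, le_max_right x y]

theorem ConvexOn.exists_convex_weights_add_mul_le {F : ℝ × ℝ → ℝ} {p : ℝ × ℝ} {C : ℝ}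
    (hF : ConvexOn ℝ univ F) (hd : DifferentiableAt ℝ F p)
    (hC : ∀ x y, F (x, y) ≤ max x y + C) :
    ∃ a b : ℝ, 0 ≤ a ∧ 0 ≤ b ∧ a + b = 1 ∧
      ∀ x y, F p + a * (x - p.1) + b * (y - p.2) ≤ F (x, y) := by
  set L := fderiv ℝ F p
  have hsupp : ∀ x y, F p + L (1, 0) * (x - p.1) + L (0, 1) * (y - p.2) ≤ F (x, y) := by
    intro x y
    have hL : L ((x, y) - p) = L (1, 0) * (x - p.1) + L (0, 1) * (y - p.2) := by
      rw [show (x, y) - p = (x - p.1) • ((1 : ℝ), (0 : ℝ)) + (y - p.2) • ((0 : ℝ), (1 : ℝ)) by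
        ext <;> simp, map_add, map_smul, map_smul, smul_eq_mul, smul_eq_mul]
      ring
    linarith [hF.add_fderiv_sub_le (mem_univ p) (mem_univ (x, y)) hd.hasFDerivAt]
  obtain ⟨ha, hb, hab⟩ := nonneg_nonneg_add_eq_one_of_le_max_add
    (a := L (1, 0)) (b := L (0, 1)) (C := C - F p + L (1, 0) * p.1 + L (0, 1) * p.2)
    fun x y => by linarith [hsupp x y, hC x y]
  exact ⟨_, _, ha, hb, hab, hsupp⟩

theorem mul_deriv_deriv_add_mul_le {F : ℝ × ℝ → ℝ} {U V : ℝ → ℝ} {t₀ a b : ℝ}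
    (hF : ContDiffAt ℝ 2 F (U t₀, V t₀)) (hU : ContDiffAt ℝ 2 U t₀) (hV : ContDiffAt ℝ 2 V t₀)
    (hsupp : ∀ x y, F (U t₀, V t₀) + a * (x - U t₀) + b * (y - V t₀) ≤ F (x, y)) :
    a * deriv (deriv U) t₀ + b * deriv (deriv V) t₀ ≤ deriv (deriv fun t => F (U t, V t)) t₀ := by
  have hlin : deriv (deriv fun t => a * U t + b * V t) t₀ =
      a * deriv (deriv U) t₀ + b * deriv (deriv V) t₀ := by
    simp only [deriv_deriv_eq_iteratedDeriv_two]
    rw [iteratedDeriv_fun_add (contDiffAt_const.mul hU) (contDiffAt_const.mul hV),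
      iteratedDeriv_const_mul_field, iteratedDeriv_const_mul_field]
  rw [← hlin]
  refine deriv_deriv_le_of_isLocalMin_sub (hF.comp t₀ (hU.prodMk hV))
    ((contDiffAt_const.mul hU).add (contDiffAt_const.mul hV)) (Eventually.of_forall fun t => ?_)
  simp only [Pi.sub_apply]
  linarith [hsupp (U t) (V t)]

theorem mul_ddcDir_add_mul_le {n : ℕ} {F : ℝ × ℝ → ℝ} {u v : (Fin n → ℂ) → ℝ}
    {z : Fin n → ℂ} {a b : ℝ} (hF : ContDiffAt ℝ 2 F (u z, v z)) (hu : ContDiffAt ℝ 2 u z)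
    (hv : ContDiffAt ℝ 2 v z)
    (hsupp : ∀ x y, F (u z, v z) + a * (x - u z) + b * (y - v z) ≤ F (x, y)) (w : Fin n → ℂ) :
    a * ddcDir u z w + b * ddcDir v z w ≤ ddcDir (fun z => F (u z, v z)) z w := by
  have hline (w' : Fin n → ℂ) :
      a * deriv (deriv fun t : ℝ => u (z + (t : ℂ) • w')) 0 +
        b * deriv (deriv fun t : ℝ => v (z + (t : ℂ) • w')) 0 ≤
      deriv (deriv fun t : ℝ => F (u (z + (t : ℂ) • w'), v (z + (t : ℂ) • w'))) 0 := by
    have hγ : ContDiffAt ℝ 2 (fun t : ℝ => z + (t : ℂ) • w') 0 :=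
      (contDiff_const.add (Complex.ofRealCLM.contDiff.smul contDiff_const)).contDiffAt
    have hγ₀ : z + ((0 : ℝ) : ℂ) • w' = z := by simp
    rw [← hγ₀] at hu hv hF hsupp
    exact mul_deriv_deriv_add_mul_le hF (hu.comp 0 hγ) (hv.comp 0 hγ) hsupp
  have hI := hline (Complex.I • w)
  simp only [← mul_smul] at hI
  unfold ddcDir
  linarith [hline w]

theorem regularized_max_A_psh_general {n : ℕ} (Ω : Set (Fin n → ℂ)) (hΩ : IsOpen Ω)
    (ε : ℝ) (maxe : ℝ → ℝ → ℝ)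
    (hsmooth : ContDiff ℝ (⊤ : ℕ∞) fun p : ℝ × ℝ => maxe p.1 p.2)
    (hconv : ConvexOn ℝ Set.univ fun p : ℝ × ℝ => maxe p.1 p.2)
    (hmax : ∀ x y : ℝ, ε < |x - y| → maxe x y = max x y)
    (A : (Fin n → ℂ) → Matrix (Fin n) (Fin n) ℂ)
    (u v : (Fin n → ℂ) → ℝ)
    (hu : ContDiffOn ℝ (⊤ : ℕ∞) u Ω) (hv : ContDiffOn ℝ (⊤ : ℕ∞) v Ω)
    (hupos : ∀ z ∈ Ω, ∀ w : Fin n → ℂ, 0 ≤ hermEval A z w + ddcDir u z w)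
    (hvpos : ∀ z ∈ Ω, ∀ w : Fin n → ℂ, 0 ≤ hermEval A z w + ddcDir v z w) :
    ∀ z ∈ Ω, ∀ w : Fin n → ℂ,
      0 ≤ hermEval A z w + ddcDir (fun z => maxe (u z) (v z)) z w := by
  intro z hz w
  have h2 : (2 : WithTop ℕ∞) ≤ ((⊤ : ℕ∞) : WithTop ℕ∞) := WithTop.coe_le_coe.2 le_top
  obtain ⟨a, b, ha, hb, hab, hsupp⟩ := hconv.exists_convex_weights_add_mul_le
    ((hsmooth.differentiable (by simp)) (u z, v z)) (hconv.le_max_add_of_eq_max hmax)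
  have hddc := mul_ddcDir_add_mul_le (hsmooth.of_le h2).contDiffAt
    ((hu.contDiffAt (hΩ.mem_nhds hz)).of_le h2) ((hv.contDiffAt (hΩ.mem_nhds hz)).of_le h2)
    hsupp w
  calc 0 ≤ a * (hermEval A z w + ddcDir u z w) + b * (hermEval A z w + ddcDir v z w) :=
        add_nonneg (mul_nonneg ha (hupos z hz w)) (mul_nonneg hb (hvpos z hz w))
    _ = (a + b) * hermEval A z w + (a * ddcDir u z w + b * ddcDir v z w) := by ring
    _ ≤ hermEval A z w + ddcDir (fun z => maxe (u z) (v z)) z w := by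
        rw [hab, one_mul]
        gcongr

/-- **Demailly's lemma: the regularized maximum preserves `A`-plurisubharmonicity.**
If `A` is a smooth Hermitian-matrix-valued function (a smooth real `(1,1)`-form) and
`u, v` are smooth real functions on an open `Ω ⊆ ℂⁿ` with `A + dd^c u ≥ 0` and
`A + dd^c v ≥ 0` pointwise as Hermitian forms, then `A + dd^c max_ε(u, v) ≥ 0`. -/
theorem regularized_max_A_psh {n : ℕ} (Ω : Set (Fin n → ℂ)) (hΩ : IsOpen Ω)
    (ε : ℝ) (hε : 0 < ε) (maxe : ℝ → ℝ → ℝ)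
    (hsmooth : ContDiff ℝ (⊤ : ℕ∞) fun p : ℝ × ℝ => maxe p.1 p.2)
    (hconv : ConvexOn ℝ Set.univ fun p : ℝ × ℝ => maxe p.1 p.2)
    (hmono1 : ∀ y : ℝ, Monotone fun x => maxe x y)
    (hmono2 : ∀ x : ℝ, Monotone fun y => maxe x y)
    (hmax : ∀ x y : ℝ, ε < |x - y| → maxe x y = max x y)
    (A : (Fin n → ℂ) → Matrix (Fin n) (Fin n) ℂ)
    (hAsmooth : ∀ i j : Fin n, ContDiffOn ℝ (⊤ : ℕ∞) (fun z => A z i j) Ω)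
    (hAherm : ∀ z i j, A z j i = conj (A z i j))
    (u v : (Fin n → ℂ) → ℝ)
    (hu : ContDiffOn ℝ (⊤ : ℕ∞) u Ω) (hv : ContDiffOn ℝ (⊤ : ℕ∞) v Ω)
    (hupos : ∀ z ∈ Ω, ∀ w : Fin n → ℂ, 0 ≤ hermEval A z w + ddcDir u z w)
    (hvpos : ∀ z ∈ Ω, ∀ w : Fin n → ℂ, 0 ≤ hermEval A z w + ddcDir v z w) :
    ∀ z ∈ Ω, ∀ w : Fin n → ℂ,
      0 ≤ hermEval A z w + ddcDir (fun z => maxe (u z) (v z)) z w :=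
  regularized_max_A_psh_general Ω hΩ ε maxe hsmooth hconv hmax A u v hu hv hupos hvpos
end

section
/- Let q be a symmetric bilinear form on a real vector space, and suppose η ∈ V satisfies q(η, η) = 0. Then in the Fujiki-type symmetrized form F of degree 2n (the polarization of v ↦ q(v,v)ⁿ), for any ρ₁,...,ρ_{n-1} ∈ V, F(η,...,η (n+1 times), ρ₁, ..., ρ_{n-1}) = 0; and if additionally q(η, ρ) ≠ 0 for some ρ, then F(η,...,η (n times), ρ, ..., ρ (n times)) = q(η,ρ)ⁿ · n!·n!·2ⁿ/(2n)! ≠ 0. -/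
open Finset Equiv Nat

/-!
Each term of `F` pairs the slots `2k, 2k+1` after a permutation `σ`, and it vanishes as soon as
some pair carries `η` twice, since `q(η,η) = 0`. With `n+1` copies of `η` in `2n` slots this
happens for every `σ` by pigeonhole. With `n` copies of `η` followed by `n` of `ρ`, the only
surviving `σ` are those whose pulled-back `η/ρ` coloring is mixed on every pair; each contributes
`q(η,ρ)ⁿ`. There are `2ⁿ` mixed colorings, and each is the pullback of the standard one under
exactly `n!·n!` permutations, the order of the stabilizer of a coloring with two fibers of size
`n`.
-/

namespace FujikiPairing

theorem card_perm_comp_eq_of_card_fiber_eq {α ι : Type*} [Fintype α] [DecidableEq α]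
    [Fintype ι] [DecidableEq ι] {f g : α → ι}
    (h : ∀ i, Fintype.card {a // g a = i} = Fintype.card {a // f a = i}) :
    Fintype.card {σ : Perm α // f ∘ σ = g} = ∏ i, (Fintype.card {a // f a = i})! := by
  obtain ⟨τ, rfl⟩ : ∃ τ : Perm α, f ∘ τ = g :=
    ⟨ofFiberEquiv fun i => Fintype.equivOfCardEq (h i), funext (ofFiberEquiv_map _)⟩
  rw [← DomMulAct.stabilizer_card f]
  refine Fintype.card_congr <| (Equiv.mulRight τ⁻¹).subtypeEquiv fun σ => ?_
  rw [coe_mulRight, Perm.coe_mul, Perm.inv_def, ← Function.comp_assoc, comp_symm_eq]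

lemma card_filter_perm_val_lt {m : ℕ} (σ : Perm (Fin m)) (k : ℕ) :
    #{i | (σ i : ℕ) < k} = min m k := by
  rw [← Fin.card_filter_val_lt]
  exact card_equiv σ fun i => by simp

variable {n : ℕ}

def evenSlot (k : Fin n) : Fin (2 * n) := ⟨2 * k, by omega⟩

def oddSlot (k : Fin n) : Fin (2 * n) := ⟨2 * k + 1, by omega⟩

def pairOf (i : Fin (2 * n)) : Fin n := ⟨i / 2, by omega⟩

@[simp] lemma pairOf_evenSlot (k : Fin n) : pairOf (evenSlot k) = k :=
  Fin.ext (by simp [pairOf, evenSlot])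

@[simp] lemma pairOf_oddSlot (k : Fin n) : pairOf (oddSlot k) = k :=
  Fin.ext (by simp [pairOf, oddSlot]; omega)

@[simp] lemma oddSlot_ne_evenSlot (k l : Fin n) : oddSlot k ≠ evenSlot l := by
  simp [oddSlot, evenSlot, Fin.ext_iff]; omega

lemma exists_eq_evenSlot_or_eq_oddSlot (i : Fin (2 * n)) :
    ∃ k, i = evenSlot k ∨ i = oddSlot k :=
  ⟨pairOf i, by simp only [Fin.ext_iff, evenSlot, oddSlot, pairOf]; omega⟩

def IsMixed (d : Fin (2 * n) → Bool) : Prop := ∀ k, d (evenSlot k) ≠ d (oddSlot k)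

instance : DecidablePred (IsMixed (n := n)) := fun _ => Fintype.decidableForallFintype

theorem exists_true_pair_of_mapsTo_of_card_lt {d : Fin (2 * n) → Bool} {K : Finset (Fin n)}
    (hK : ∀ i, d i → pairOf i ∈ K) (hcard : #K < #{i | d i}) :
    ∃ k, d (evenSlot k) ∧ d (oddSlot k) := by
  obtain ⟨i, hi, j, hj, hij, hpair⟩ :=
    exists_ne_map_eq_of_card_lt_of_maps_to hcard fun i hi => hK i (mem_filter.1 hi).2
  simp only [mem_filter, mem_univ, true_and] at hi hj
  obtain ⟨k, rfl | rfl⟩ := exists_eq_evenSlot_or_eq_oddSlot i <;>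
  obtain ⟨l, rfl | rfl⟩ := exists_eq_evenSlot_or_eq_oddSlot j <;>
  simp only [pairOf_evenSlot, pairOf_oddSlot] at hpair <;> subst hpair
  · exact absurd rfl hij
  · exact ⟨k, hi, hj⟩
  · exact ⟨k, hj, hi⟩
  · exact absurd rfl hij

theorem exists_true_pair_of_lt_card {d : Fin (2 * n) → Bool} (hcard : n < #{i | d i}) :
    ∃ k, d (evenSlot k) ∧ d (oddSlot k) :=
  exists_true_pair_of_mapsTo_of_card_lt (K := univ) (fun _ _ => mem_univ _) (by simpa using hcard)

theorem exists_true_pair_of_not_isMixed {d : Fin (2 * n) → Bool} (hcard : n ≤ #{i | d i})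
    (hd : ¬IsMixed d) : ∃ k, d (evenSlot k) ∧ d (oddSlot k) := by
  obtain ⟨k₀, hk₀⟩ : ∃ k, d (evenSlot k) = d (oddSlot k) := by simpa [IsMixed] using hd
  cases hevenk₀ : d (evenSlot k₀)
  · refine exists_true_pair_of_mapsTo_of_card_lt (K := univ.erase k₀) (fun i hi => ?_) ?_
    · obtain ⟨k, rfl | rfl⟩ := exists_eq_evenSlot_or_eq_oddSlot i <;>
        refine mem_erase.2 ⟨fun hk => ?_, mem_univ _⟩ <;> simp_all
    · have := k₀.isLt
      rw [card_erase_of_mem (mem_univ _), Finset.card_univ, Fintype.card_fin]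
      omega
  · exact ⟨k₀, hevenk₀, hk₀ ▸ hevenk₀⟩

theorem card_fiber_of_isMixed {d : Fin (2 * n) → Bool} (hd : IsMixed d) (b : Bool) :
    Fintype.card {i // d i = b} = n := by
  refine (Fintype.card_of_bijective (f := fun i => pairOf i.1) ⟨?_, fun k => ?_⟩).trans
    (Fintype.card_fin n)
  · rintro ⟨i, hi⟩ ⟨j, hj⟩ (hpair : pairOf i = pairOf j)
    have hmixed := hd (pairOf i)
    obtain ⟨k, rfl | rfl⟩ := exists_eq_evenSlot_or_eq_oddSlot i <;>
    obtain ⟨l, rfl | rfl⟩ := exists_eq_evenSlot_or_eq_oddSlot j <;>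
    simp only [pairOf_evenSlot, pairOf_oddSlot] at hpair hmixed <;> subst hpair <;> simp_all
  · by_cases h : d (evenSlot k) = b
    · exact ⟨⟨evenSlot k, h⟩, pairOf_evenSlot k⟩
    · refine ⟨⟨oddSlot k, ?_⟩, pairOf_oddSlot k⟩
      have hmixed := hd k
      cases b <;> simp_all

def isMixedEquiv : {d : Fin (2 * n) → Bool // IsMixed d} ≃ (Fin n → Bool) where
  toFun d k := d.1 (evenSlot k)
  invFun s := ⟨fun i => if i = evenSlot (pairOf i) then s (pairOf i) else !s (pairOf i),
    fun k => by simp⟩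
  left_inv d := by
    ext i
    obtain ⟨k, rfl | rfl⟩ := exists_eq_evenSlot_or_eq_oddSlot i
    · simp
    · simpa using Bool.eq_not.mpr (d.2 k)
  right_inv s := by ext k; simp

lemma card_isMixed : Fintype.card {d : Fin (2 * n) → Bool // IsMixed d} = 2 ^ n := by
  simp [Fintype.card_congr isMixedEquiv]

def firstHalf (n : ℕ) (i : Fin (2 * n)) : Bool := decide ((i : ℕ) < n)

lemma card_fiber_firstHalf (b : Bool) : Fintype.card {i // firstHalf n i = b} = n := by
  rw [Fintype.card_subtype]
  cases b
  · simp only [firstHalf, decide_eq_false_iff_not]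
    rw [filter_not, card_sdiff_of_subset (filter_subset _ _), Fin.card_filter_val_lt]
    simp only [Finset.card_univ, Fintype.card_fin]
    omega
  · simp only [firstHalf, decide_eq_true_eq, Fin.card_filter_val_lt]
    omega

theorem card_isMixed_comp_perm :
    Fintype.card {σ : Perm (Fin (2 * n)) // IsMixed (firstHalf n ∘ σ)} =
      2 ^ n * (n ! * n !) := by
  rw [← Fintype.card_congr <| sigmaSubtypeFiberEquivSubtype
      (fun σ : Perm (Fin (2 * n)) => firstHalf n ∘ σ) fun _ => Iff.rfl, Fintype.card_sigma]
  calc ∑ d : {d // IsMixed d}, Fintype.card {σ : Perm (Fin (2 * n)) // firstHalf n ∘ σ = d}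
      = ∑ _d : {d : Fin (2 * n) → Bool // IsMixed d}, n ! * n ! := sum_congr rfl fun d _ => by
        rw [card_perm_comp_eq_of_card_fiber_eq fun b => by
          rw [card_fiber_of_isMixed d.2, card_fiber_firstHalf],
          Fintype.prod_bool, card_fiber_firstHalf, card_fiber_firstHalf]
    _ = 2 ^ n * (n ! * n !) := by simp [card_isMixed]

theorem prod_pairs_eq_ite {R V : Type*} [CommMonoidWithZero R] {B : V → V → R}
    (hB : ∀ a b, B a b = B b a) {η : V} (hη : B η η = 0) (ρ : V) (σ : Perm (Fin (2 * n))) :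
    ∏ k, B (if (σ (evenSlot k) : ℕ) < n then η else ρ)
        (if (σ (oddSlot k) : ℕ) < n then η else ρ) =
      if IsMixed (firstHalf n ∘ σ) then B η ρ ^ n else 0 := by
  split_ifs with hmixed
  · calc _ = ∏ _k : Fin n, B η ρ := prod_congr rfl fun k _ => by
          have hk := hmixed k
          simp only [firstHalf, Function.comp_apply, ne_eq, decide_eq_decide, not_iff] at hk
          by_cases h : (σ (evenSlot k) : ℕ) < n
          · rw [if_pos h, if_neg fun h' => hk.mpr h' h]
          · rw [if_neg h, if_pos (hk.mp h), hB]
      _ = B η ρ ^ n := by simp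
  · obtain ⟨k, hk⟩ := exists_true_pair_of_not_isMixed
      (by simp [firstHalf, card_filter_perm_val_lt]; omega) hmixed
    simp only [firstHalf, Function.comp_apply, decide_eq_true_eq] at hk
    exact prod_eq_zero (mem_univ k) (by rw [if_pos hk.1, if_pos hk.2, hη])

end FujikiPairing

open FujikiPairing in
/-- **Powers of a parabolic class in the Fujiki form.**  Let `F` be the Fujiki-type
symmetric `2n`-multilinear form `F(x) = (1/(2n)!) Σ_σ Π_k q(x_{σ(2k-1)}, x_{σ(2k)})`,
the polarization of `v ↦ q(v,v)ⁿ`, and let `η` satisfy `q(η,η) = 0`.  Then `F`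
vanishes on any tuple containing `η` at least `n+1` times, while
`F(η,...,η, ρ,...,ρ)` (each `n` times) equals `q(η,ρ)ⁿ · n!·n!·2ⁿ/(2n)!`, which is
nonzero whenever `q(η,ρ) ≠ 0`. -/
theorem parabolic_powers_fujiki (V : Type*) [AddCommGroup V] [Module ℝ V]
    (n : ℕ) (hn : 1 ≤ n)
    (q : V →ₗ[ℝ] V →ₗ[ℝ] ℝ) (hq : ∀ a b : V, q a b = q b a)
    (F : (Fin (2 * n) → V) → ℝ)
    (hF : ∀ x : Fin (2 * n) → V,
      F x = (1 / (Nat.factorial (2 * n) : ℝ)) *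
        ∑ σ : Equiv.Perm (Fin (2 * n)), ∏ k : Fin n,
          q (x (σ ⟨2 * k.1, by have := k.2; omega⟩))
            (x (σ ⟨2 * k.1 + 1, by have := k.2; omega⟩)))
    (η : V) (hiso : q η η = 0) :
    (∀ ρ : Fin (n - 1) → V,
      F (fun i => if h : (i : ℕ) < n + 1 then η
          else ρ ⟨(i : ℕ) - (n + 1), by have := i.2; omega⟩) = 0) ∧
    (∀ ρ : V,
      F (fun i => if (i : ℕ) < n then η else ρ) =
        q η ρ ^ n * ((n.factorial * n.factorial * 2 ^ n : ℕ) : ℝ) /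
          (Nat.factorial (2 * n) : ℝ) ∧
      (q η ρ ≠ 0 → F (fun i => if (i : ℕ) < n then η else ρ) ≠ 0)) := by
  have hF' : ∀ x, F x = 1 / ((2 * n)! : ℝ) *
      ∑ σ : Perm (Fin (2 * n)), ∏ k, q (x (σ (evenSlot k))) (x (σ (oddSlot k))) := hF
  refine ⟨fun ρ => ?_, fun ρ => ?_⟩
  · rw [hF']
    refine mul_eq_zero_of_right _ (sum_eq_zero fun σ _ => ?_)
    obtain ⟨k, hk⟩ := exists_true_pair_of_lt_card (d := fun i => decide ((σ i : ℕ) < n + 1))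
      (by simp only [decide_eq_true_eq, card_filter_perm_val_lt]; omega)
    simp only [decide_eq_true_eq] at hk
    exact prod_eq_zero (mem_univ k) (by rw [dif_pos hk.1, dif_pos hk.2, hiso])
  · have hvalue : F (fun i => if (i : ℕ) < n then η else ρ) =
        q η ρ ^ n * ((n ! * n ! * 2 ^ n : ℕ) : ℝ) / ((2 * n)! : ℝ) := by
      rw [hF', sum_congr rfl fun σ _ => prod_pairs_eq_ite (B := fun a b => q a b) hq hiso ρ σ,
        sum_ite, sum_const_zero, add_zero, sum_const, ← Fintype.card_subtype,
        card_isMixed_comp_perm, nsmul_eq_mul]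
      push_cast
      ring
    refine ⟨hvalue, fun hne => ?_⟩
    rw [hvalue]
    positivity
end
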